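/- For all n×n real matrices L and G, setting F = L − tr(L)·I (the gradient of the Hamiltonian H_Sem = (tr(L_S²) − tr(L_A²) − (tr L_S)²)/2 with respect to ((·,·))), one has ((L, a([[F,G]]) − [[a(F),G]] − [[F,a(G)]])) = −((L, [[ρ(L), G]])). (This is the Semenov-Tian-Shansky half of the trihamiltonian recursion P_Sem dH_Sem = P_Lin dH_Lin.) -/

import Mathlib

open Matrix

noncomputable section

/-- Symmetric part of a matrix. -/
def symPart {n : ℕ} (L : Matrix (Fin n) (Fin n) ℝ) : Matrix (Fin n) (Fin n) ℝ :=
  (1/2 : ℝ) • (L + Lᵀ)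

/-- Antisymmetric part of a matrix. -/
def skewPart {n : ℕ} (L : Matrix (Fin n) (Fin n) ℝ) : Matrix (Fin n) (Fin n) ℝ :=
  (1/2 : ℝ) • (L - Lᵀ)

/-- Commutator. -/
def mcomm {n : ℕ} (A B : Matrix (Fin n) (Fin n) ℝ) : Matrix (Fin n) (Fin n) ℝ :=
  A * B - B * A

/-- Jordan product. -/
def jord {n : ℕ} (A B : Matrix (Fin n) (Fin n) ℝ) : Matrix (Fin n) (Fin n) ℝ :=
  (1/2 : ℝ) • (A * B + B * A)

/-- The non-standard Lie bracket [[L,M]]. -/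
def dbr {n : ℕ} (L M : Matrix (Fin n) (Fin n) ℝ) : Matrix (Fin n) (Fin n) ℝ :=
  mcomm (symPart L) (symPart M) - mcomm (skewPart L) (skewPart M)
    - mcomm (symPart L) (skewPart M) - mcomm (skewPart L) (symPart M)

/-- The commutative product L ⊙ M. -/
def odot {n : ℕ} (L M : Matrix (Fin n) (Fin n) ℝ) : Matrix (Fin n) (Fin n) ℝ :=
  jord (symPart L) (symPart M) - jord (skewPart L) (skewPart M)
    + jord (skewPart L) (symPart M) + jord (symPart L) (skewPart M)

/-- ρ(L) = L_p − L_n: strictly upper part minus strictly lower part. -/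
def rho {n : ℕ} (L : Matrix (Fin n) (Fin n) ℝ) : Matrix (Fin n) (Fin n) ℝ :=
  Matrix.of fun i j => if i < j then L i j else if j < i then -(L i j) else 0

/-- a(L) = ρ(L_S). -/
def aMap {n : ℕ} (L : Matrix (Fin n) (Fin n) ℝ) : Matrix (Fin n) (Fin n) ℝ :=
  rho (symPart L)

/-- The scalar product ((L,M)) = tr(L Mᵀ). -/
def form {n : ℕ} (L M : Matrix (Fin n) (Fin n) ℝ) : ℝ :=
  (L * Mᵀ).trace

/-!
The shift by `tr(L)·I` is invisible to `[[·,·]]` and to `a`. Writing `[[L,M]] = [Lᵀ, M_S] − [L, M_A]`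
and using `((X,[Y,Z])) = (([Yᵀ,X],Z))`, one gets `((L,[[L,M]])) = 0` (as `[Lᵀ,L]` is symmetric and
`M_A` skew), so by polarization `((X,[[Y,Z]])) = −((Y,[[X,Z]]))`; in particular the `a(G)` term
vanishes. Since `ρ` is self-adjoint for `((·,·))` and exchanges symmetric and skew matrices,
`ρ(L)_S = ρ(L_A)`, hence `((L, a([[L,G]]))) = ((ρ(L_A), [[L,G]])) = −((L, [[ρ(L_A), G]]))`, and
`ρ(L) = a(L) + ρ(L_A)` finishes the proof.
-/

section

variable {n : ℕ}

lemma form_eq_sum (L M : Matrix (Fin n) (Fin n) ℝ) : form L M = ∑ i, ∑ j, L i j * M i j := by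
  simp [form, trace, mul_apply]

lemma form_zero_left (M : Matrix (Fin n) (Fin n) ℝ) : form 0 M = 0 := by
  simp [form]

lemma form_add_left (L M N : Matrix (Fin n) (Fin n) ℝ) :
    form (L + M) N = form L N + form M N := by
  simp [form, add_mul]

lemma form_add_right (L M N : Matrix (Fin n) (Fin n) ℝ) :
    form L (M + N) = form L M + form L N := by
  simp [form, mul_add]

lemma form_sub_right (L M N : Matrix (Fin n) (Fin n) ℝ) :
    form L (M - N) = form L M - form L N := by
  simp [form, mul_sub]

lemma form_symPart_right (L M : Matrix (Fin n) (Fin n) ℝ) :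
    form L (symPart M) = form (symPart L) M := by
  simp only [form, symPart, transpose_smul, transpose_add, transpose_transpose, mul_smul_comm,
    smul_mul_assoc, trace_smul, mul_add, add_mul, trace_add, trace_transpose_mul, add_comm]

lemma form_eq_zero_of_symm_of_skew {P N : Matrix (Fin n) (Fin n) ℝ} (hP : Pᵀ = P)
    (hN : Nᵀ = -N) : form P N = 0 := by
  have h₁ : form P N = -(P * N).trace := by rw [form, hN, mul_neg, trace_neg]
  have h₂ : form P N = (P * N).trace := by rw [form, ← trace_transpose_mul, hP, transpose_transpose]
  linarith

lemma form_mcomm_right (X Y Z : Matrix (Fin n) (Fin n) ℝ) :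
    form X (mcomm Y Z) = form (mcomm Yᵀ X) Z := by
  simp only [form, mcomm, transpose_sub, transpose_mul, mul_sub, sub_mul, trace_sub,
    Matrix.mul_assoc]
  rw [trace_mul_cycle' X]

lemma symPart_add_skewPart (L : Matrix (Fin n) (Fin n) ℝ) : symPart L + skewPart L = L := by
  simp only [symPart, skewPart, ← smul_add]
  module

lemma symPart_sub_skewPart (L : Matrix (Fin n) (Fin n) ℝ) : symPart L - skewPart L = Lᵀ := by
  simp only [symPart, skewPart, ← smul_sub]
  module

lemma skewPart_transpose (M : Matrix (Fin n) (Fin n) ℝ) : (skewPart M)ᵀ = -skewPart M := by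
  simp only [skewPart, transpose_smul, transpose_sub, transpose_transpose, ← smul_neg, neg_sub]

lemma symPart_sub_smul_one (L : Matrix (Fin n) (Fin n) ℝ) (c : ℝ) :
    symPart (L - c • 1) = symPart L - c • 1 := by
  simp only [symPart, transpose_sub, transpose_smul, transpose_one]
  module

lemma rho_add (L M : Matrix (Fin n) (Fin n) ℝ) : rho (L + M) = rho L + rho M := by
  ext i j
  simp only [rho, of_apply, Matrix.add_apply]
  split_ifs <;> ring

lemma rho_sub_smul_one (L : Matrix (Fin n) (Fin n) ℝ) (c : ℝ) : rho (L - c • 1) = rho L := by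
  ext i j
  simp only [rho, of_apply, Matrix.sub_apply, Matrix.smul_apply, Matrix.one_apply, smul_eq_mul]
  split_ifs <;> first | omega | simp

lemma symPart_rho (L : Matrix (Fin n) (Fin n) ℝ) : symPart (rho L) = rho (skewPart L) := by
  ext i j
  simp only [symPart, skewPart, rho, of_apply, Matrix.smul_apply, Matrix.add_apply, Matrix.sub_apply, transpose_apply,
    smul_eq_mul]
  split_ifs <;> first | omega | ring

lemma form_rho_right (L M : Matrix (Fin n) (Fin n) ℝ) : form L (rho M) = form (rho L) M := by
  simp only [form_eq_sum, rho, of_apply]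
  refine Finset.sum_congr rfl fun i _ => Finset.sum_congr rfl fun j _ => ?_
  split_ifs <;> ring

lemma aMap_sub_smul_one (L : Matrix (Fin n) (Fin n) ℝ) (c : ℝ) : aMap (L - c • 1) = aMap L := by
  rw [aMap, symPart_sub_smul_one, rho_sub_smul_one, aMap]

lemma rho_eq_aMap_add (L : Matrix (Fin n) (Fin n) ℝ) : rho L = aMap L + rho (skewPart L) := by
  rw [aMap, ← rho_add, symPart_add_skewPart]

lemma dbr_eq_mcomm (L M : Matrix (Fin n) (Fin n) ℝ) :
    dbr L M = mcomm Lᵀ (symPart M) - mcomm L (skewPart M) := by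
  rw [dbr, ← symPart_sub_skewPart L]
  conv_rhs => enter [2, 1]; rw [← symPart_add_skewPart L]
  simp only [mcomm, sub_mul, mul_sub, add_mul, mul_add]
  abel

lemma dbr_add_left (X Y Z : Matrix (Fin n) (Fin n) ℝ) : dbr (X + Y) Z = dbr X Z + dbr Y Z := by
  simp only [dbr_eq_mcomm, mcomm, transpose_add, add_mul, mul_add]
  abel

lemma dbr_sub_smul_one_left (L M : Matrix (Fin n) (Fin n) ℝ) (c : ℝ) :
    dbr (L - c • 1) M = dbr L M := by
  simp only [dbr_eq_mcomm, mcomm, transpose_sub, transpose_smul, transpose_one, sub_mul, mul_sub,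
    smul_mul_assoc, mul_smul_comm, one_mul, mul_one]
  abel

lemma form_dbr_self (L M : Matrix (Fin n) (Fin n) ℝ) : form L (dbr L M) = 0 := by
  have hsymm : (mcomm Lᵀ L)ᵀ = mcomm Lᵀ L := by
    simp only [mcomm, transpose_sub, transpose_mul, transpose_transpose]
  rw [dbr_eq_mcomm, form_sub_right, form_mcomm_right, form_mcomm_right, transpose_transpose,
    mcomm, sub_self, form_zero_left,
    form_eq_zero_of_symm_of_skew hsymm (skewPart_transpose M), sub_zero]

lemma form_dbr_comm (X Y Z : Matrix (Fin n) (Fin n) ℝ) :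
    form X (dbr Y Z) = -form Y (dbr X Z) := by
  have h := form_dbr_self (X + Y) Z
  rw [dbr_add_left, form_add_left, form_add_right, form_add_right, form_dbr_self,
    form_dbr_self] at h
  linarith

end

/-- The Semenov-Tian-Shansky half of the recursion P_Sem dH_Sem = P_Lin dH_Lin. -/
theorem stmt_11 {n : ℕ} (L G : Matrix (Fin n) (Fin n) ℝ) :
    form L (aMap (dbr (L - L.trace • (1 : Matrix (Fin n) (Fin n) ℝ)) G)
        - dbr (aMap (L - L.trace • (1 : Matrix (Fin n) (Fin n) ℝ))) G
        - dbr (L - L.trace • (1 : Matrix (Fin n) (Fin n) ℝ)) (aMap G))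
      = - form L (dbr (rho L) G) := by
  have h_aMap : form L (aMap (dbr L G)) = -form L (dbr (rho (skewPart L)) G) := by
    rw [aMap, form_rho_right, form_symPart_right, symPart_rho, form_dbr_comm]
  rw [dbr_sub_smul_one_left, dbr_sub_smul_one_left, aMap_sub_smul_one, form_sub_right,
    form_sub_right, form_dbr_self, h_aMap, rho_eq_aMap_add L, dbr_add_left, form_add_right]
  ring
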